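/- Let M ∈ {0,1}^{k×m} be an evaluation matrix and define, for each j ∈ {1,…,m}, the polynomial p_j(x) = ∏_{i=1}^{k} (x - i)^{1 - M(i,j)} ∈ ℝ[x]. Then for any subset I ⊆ {1,…,m}: the formula ∃ x ∈ ℝ, ∀ j ∈ I, p_j(x) = 0 is unsatisfiable if and only if for every i ∈ {1,…,k} there exists j ∈ I with M(i,j) = 1. -/
import Mathlib


theorem conflict_iff_cover (k m : ℕ) (hk : 0 < k)
    (M : Fin k → Fin m → ℕ) (hM : ∀ i j, M i j ≤ 1) :
    ∀ I : Finset (Fin m),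
      (¬ ∃ x : ℝ, ∀ j ∈ I, Polynomial.eval x
          (∏ i : Fin k, (Polynomial.X - Polynomial.C ((i : ℕ) + 1 : ℝ)) ^ (1 - M i j)) = 0)
      ↔ ∀ i : Fin k, ∃ j ∈ I, M i j = 1 := by
  intro I
  constructor
  · -- contrapositive
    intro h i
    by_contra hc
    push_neg at hc
    apply h
    refine ⟨(i : ℕ) + 1, fun j hj => ?_⟩
    have hMij : M i j = 0 := by
      have := hM i j
      have := hc j hj
      omega
    rw [Polynomial.eval_prod]
    apply Finset.prod_eq_zero (Finset.mem_univ i)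
    simp [hMij]
  · intro hcov
    rintro ⟨x, hx⟩
    -- I is nonempty
    obtain ⟨j0, hj0, _⟩ := hcov ⟨0, hk⟩
    have h0 := hx j0 hj0
    rw [Polynomial.eval_prod, Finset.prod_eq_zero_iff] at h0
    obtain ⟨i0, -, hi0⟩ := h0
    simp only [Polynomial.eval_pow, Polynomial.eval_sub, Polynomial.eval_X,
      Polynomial.eval_C, pow_eq_zero_iff', sub_eq_zero] at hi0
    obtain ⟨hxeq, hne⟩ := hi0
    obtain ⟨j1, hj1, hMj1⟩ := hcov i0
    have h1 := hx j1 hj1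
    rw [Polynomial.eval_prod, Finset.prod_eq_zero_iff] at h1
    obtain ⟨i1, -, hi1⟩ := h1
    simp only [Polynomial.eval_pow, Polynomial.eval_sub, Polynomial.eval_X,
      Polynomial.eval_C, pow_eq_zero_iff', sub_eq_zero, hxeq] at hi1
    obtain ⟨heq, hne1⟩ := hi1
    have : (i0 : ℕ) = (i1 : ℕ) := by
      have := heq
      exact_mod_cast (by linarith : ((i0:ℕ):ℝ) = ((i1:ℕ):ℝ))
    have : i0 = i1 := Fin.ext this
    subst this
    omega
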